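/- arXiv:2003.05168 — 3 statements merged into one kernel-verified Lean document; each statement's English description precedes it below -/
import Mathlib

section
/- Let k ≥ 2 be an integer, let w_1, …, w_{k−1} ≥ 0 be window durations and θ_1, …, θ_{k−1} real execution rates with θ_j ≤ θ_{j+1} for all 1 ≤ j ≤ k−2, and let u be a real number. Write W_p = w_1 + ⋯ + w_p (W_0 = 0). Suppose Σ_{j=1}^{k−1} θ_j·w_j ≥ u·W_{k−1}. Then for every real t ≥ 0 and every index p with 1 ≤ p ≤ k−1 and W_{p−1} ≤ t < W_p, the total allocation over [t, W_{k−1}], namely (W_p − t)·θ_p + Σ_{j=p+1}^{k−1} θ_j·w_j, is at least u·(W_{k−1} − t). -/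
/-- Total duration of the first `p` windows: `W_p = w_1 + ⋯ + w_p` (with `W_0 = 0`). -/
noncomputable def Wsum (w : ℕ → ℝ) (p : ℕ) : ℝ := ∑ j ∈ Finset.Icc 1 p, w j

/-!
If the rates are nondecreasing, then before time `t` (which lies in window `p`) every rate is at
most `θ_p`, and after `t` every rate is at least `θ_p`. So the allocation `L` before `t` satisfies
`L ≤ θ_p t` and the allocation `R` after `t` satisfies `R ≥ θ_p (W_{k-1} - t)`. Given
`L + R ≥ u W_{k-1}`, either `u ≤ θ_p` and the lower bound on `R` suffices, or `u > θ_p` and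
`R ≥ u W_{k-1} - θ_p t ≥ u (W_{k-1} - t)`.
-/

open Finset

lemma le_of_add_ge_of_le_mul_of_mul_le {u a s T L R : ℝ} (hs : 0 ≤ s) (hT : 0 ≤ T)
    (hL : L ≤ a * s) (hR : a * T ≤ R) (htotal : u * (s + T) ≤ L + R) : u * T ≤ R := by
  rcases le_total u a with hua | hau
  · nlinarith
  · nlinarith

lemma sum_Icc_one_add_sum_Icc (f : ℕ → ℝ) {p n : ℕ} (h : p ≤ n) :
    ∑ j ∈ Icc 1 p, f j + ∑ j ∈ Icc (p + 1) n, f j = ∑ j ∈ Icc 1 n, f j := by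
  simpa only [← Icc_add_one_left_eq_Ioc, zero_add] using sum_Ioc_consecutive f (Nat.zero_le p) h

lemma Wsum_sub_one_add {w : ℕ → ℝ} {p : ℕ} (hp : 1 ≤ p) : Wsum w (p - 1) + w p = Wsum w p := by
  obtain ⟨q, rfl⟩ := Nat.exists_eq_add_of_le' hp
  simp only [Wsum, add_tsub_cancel_right, sum_Icc_succ_top (Nat.le_add_left 1 q)]

lemma monotoneOn_Icc_of_le_add_one {θ : ℕ → ℝ} {n : ℕ}
    (h : ∀ j, 1 ≤ j → j ≤ n - 1 → θ j ≤ θ (j + 1)) : MonotoneOn θ (Set.Icc 1 n) := by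
  refine monotoneOn_of_le_succ Set.ordConnected_Icc fun j _ hj hj1 => ?_
  simp only [Set.mem_Icc, Order.succ_eq_add_one] at hj hj1 ⊢
  exact h j hj.1 (by omega)

section Allocation

variable {w θ : ℕ → ℝ} {n p : ℕ}

lemma Wsum_nonneg (hw : ∀ j, 1 ≤ j → j ≤ n → 0 ≤ w j) {q : ℕ} (hq : q ≤ n) : 0 ≤ Wsum w q :=
  sum_nonneg fun j hj => hw j (mem_Icc.1 hj).1 ((mem_Icc.1 hj).2.trans hq)

lemma Wsum_le_Wsum (hw : ∀ j, 1 ≤ j → j ≤ n → 0 ≤ w j) (hpn : p ≤ n) : Wsum w p ≤ Wsum w n := by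
  rw [Wsum, Wsum, ← sum_Icc_one_add_sum_Icc w hpn, le_add_iff_nonneg_right]
  refine sum_nonneg fun j hj => ?_
  obtain ⟨hpj, hjn⟩ := mem_Icc.1 hj
  exact hw j (by omega) hjn

lemma sum_Icc_one_mul_le_mul_Wsum (hw : ∀ j, 1 ≤ j → j ≤ n → 0 ≤ w j)
    (hθ : MonotoneOn θ (Set.Icc 1 n)) (hp1 : 1 ≤ p) (hpn : p ≤ n) {q : ℕ} (hqp : q ≤ p) :
    ∑ j ∈ Icc 1 q, θ j * w j ≤ θ p * Wsum w q := by
  rw [Wsum, mul_sum]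
  refine sum_le_sum fun j hj => ?_
  obtain ⟨hj1, hjq⟩ := mem_Icc.1 hj
  exact mul_le_mul_of_nonneg_right (hθ ⟨hj1, by omega⟩ ⟨hp1, hpn⟩ (hjq.trans hqp))
    (hw j hj1 (by omega))

lemma mul_sum_Icc_le_sum_Icc_mul (hw : ∀ j, 1 ≤ j → j ≤ n → 0 ≤ w j)
    (hθ : MonotoneOn θ (Set.Icc 1 n)) (hp1 : 1 ≤ p) :
    θ p * ∑ j ∈ Icc (p + 1) n, w j ≤ ∑ j ∈ Icc (p + 1) n, θ j * w j := by
  rw [mul_sum]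
  refine sum_le_sum fun j hj => ?_
  obtain ⟨hpj, hjn⟩ := mem_Icc.1 hj
  exact mul_le_mul_of_nonneg_right (hθ ⟨hp1, by omega⟩ ⟨by omega, hjn⟩ (by omega))
    (hw j (by omega) hjn)

lemma head_allocation_le (hw : ∀ j, 1 ≤ j → j ≤ n → 0 ≤ w j)
    (hθ : MonotoneOn θ (Set.Icc 1 n)) (hp1 : 1 ≤ p) (hpn : p ≤ n) (t : ℝ) :
    ∑ j ∈ Icc 1 (p - 1), θ j * w j + (t - Wsum w (p - 1)) * θ p ≤ θ p * t := by
  have := sum_Icc_one_mul_le_mul_Wsum hw hθ hp1 hpn (Nat.sub_le p 1)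
  linarith

lemma tail_allocation_ge (hw : ∀ j, 1 ≤ j → j ≤ n → 0 ≤ w j)
    (hθ : MonotoneOn θ (Set.Icc 1 n)) (hp1 : 1 ≤ p) (hpn : p ≤ n) (t : ℝ) :
    θ p * (Wsum w n - t) ≤ (Wsum w p - t) * θ p + ∑ j ∈ Icc (p + 1) n, θ j * w j := by
  have hsplit := sum_Icc_one_add_sum_Icc w hpn
  have := mul_sum_Icc_le_sum_Icc_mul hw hθ hp1
  rw [Wsum, Wsum, ← hsplit]
  linarith

lemma total_allocation_eq (hp1 : 1 ≤ p) (hpn : p ≤ n) (t : ℝ) :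
    ∑ j ∈ Icc 1 n, θ j * w j =
      (∑ j ∈ Icc 1 (p - 1), θ j * w j + (t - Wsum w (p - 1)) * θ p) +
        ((Wsum w p - t) * θ p + ∑ j ∈ Icc (p + 1) n, θ j * w j) := by
  rw [← sum_Icc_one_add_sum_Icc _ hpn, ← Wsum_sub_one_add hp1,
    ← sum_Icc_one_add_sum_Icc _ (Nat.sub_le p 1), Nat.sub_add_cancel hp1, Icc_self, sum_singleton]
  ring

end Allocation

theorem stmt0_general (k : ℕ) (w θ : ℕ → ℝ)
    (hw : ∀ j, 1 ≤ j → j ≤ k - 1 → 0 ≤ w j)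
    (hθmono : ∀ j, 1 ≤ j → j ≤ k - 2 → θ j ≤ θ (j + 1))
    (u : ℝ)
    (hsum : u * Wsum w (k - 1) ≤ ∑ j ∈ Finset.Icc 1 (k - 1), θ j * w j)
    (t : ℝ) (p : ℕ) (hp1 : 1 ≤ p) (hp2 : p ≤ k - 1)
    (htlo : Wsum w (p - 1) ≤ t) (hthi : t < Wsum w p) :
    u * (Wsum w (k - 1) - t) ≤
      (Wsum w p - t) * θ p + ∑ j ∈ Finset.Icc (p + 1) (k - 1), θ j * w j := by
  have hθ : MonotoneOn θ (Set.Icc 1 (k - 1)) := monotoneOn_Icc_of_le_add_one hθmono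
  have ht : 0 ≤ t := (Wsum_nonneg hw (by omega)).trans htlo
  have hWpn : Wsum w p ≤ Wsum w (k - 1) := Wsum_le_Wsum hw hp2
  refine le_of_add_ge_of_le_mul_of_mul_le ht (by linarith)
    (head_allocation_le hw hθ hp1 hp2 t) (tail_allocation_ge hw hθ hp1 hp2 t) ?_
  rwa [add_sub_cancel, ← total_allocation_eq hp1 hp2]

/-- **Lemma 1** (tail allocation of nondecreasing piecewise-constant rates):
if the rates `θ_1 ≤ ⋯ ≤ θ_{k-1}` over windows of durations `w_1, …, w_{k-1}` satisfy
`Σ θ_j w_j ≥ u·W_{k-1}`, then for any `t ≥ 0` lying in window `p` (i.e. `W_{p-1} ≤ t < W_p`),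
the allocation over `[t, W_{k-1}]`, namely `(W_p − t)·θ_p + Σ_{j=p+1}^{k−1} θ_j·w_j`,
is at least `u·(W_{k−1} − t)`. -/
theorem stmt0 (k : ℕ) (hk : 2 ≤ k) (w θ : ℕ → ℝ)
    (hw : ∀ j, 1 ≤ j → j ≤ k - 1 → 0 ≤ w j)
    (hθmono : ∀ j, 1 ≤ j → j ≤ k - 2 → θ j ≤ θ (j + 1))
    (u : ℝ)
    (hsum : u * Wsum w (k - 1) ≤ ∑ j ∈ Finset.Icc 1 (k - 1), θ j * w j)
    (t : ℝ) (ht : 0 ≤ t) (p : ℕ) (hp1 : 1 ≤ p) (hp2 : p ≤ k - 1)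
    (htlo : Wsum w (p - 1) ≤ t) (hthi : t < Wsum w p) :
    u * (Wsum w (k - 1) - t) ≤
      (Wsum w p - t) * θ p + ∑ j ∈ Finset.Icc (p + 1) (k - 1), θ j * w j :=
  stmt0_general k w θ hw hθmono u hsum t p hp1 hp2 htlo hthi
end

section
/- Let n ≥ 1, let w_1, …, w_n ≥ 0, let θ_1, …, θ_n, θH be real rates with associated rate function f. Let T > 0, θ^L > 0 and 0 < C^L ≤ C^H be reals, set D = T − C^L/θ^L, suppose D > 0, and let k ∈ {1, …, n+1} be an earliest completion window for D, with R = θ_k if k ≤ n and R = θH if k = n+1. Assume (i) Σ_{j=1}^{k−1} θ_j·w_j + R·(D − W_{k−1}) ≥ C^H − C^L; (ii) θ_j ≥ θ^L for all k ≤ j ≤ n; and (iii) θH ≥ θ^L. Then for every t ≥ D, ∫_0^t f(s) ds ≥ (C^H − C^L) + θ^L·(t − D). -/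
/-- The multi-rate fluid rate function: `f s = θ j` for `W_{j-1} ≤ s < W_j`
(`1 ≤ j ≤ n`) and `f s = θH` for `s ≥ W_n`. -/
noncomputable def rateFn (n : ℕ) (w θ : ℕ → ℝ) (θH : ℝ) (s : ℝ) : ℝ :=
  if s < Wsum w n then θ (sInf {j : ℕ | 1 ≤ j ∧ s < Wsum w j}) else θH

/-- `k ∈ {1, …, n+1}` is an earliest completion window for `D` if `W_{k-1} < D`
and, in case `k ≤ n`, also `W_k ≥ D`. -/
def ECW (n : ℕ) (w : ℕ → ℝ) (D : ℝ) (k : ℕ) : Prop :=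
  1 ≤ k ∧ k ≤ n + 1 ∧ Wsum w (k - 1) < D ∧ (k ≤ n → D ≤ Wsum w k)

/-!
The allocation up to `t` splits at `W_{k-1}` and at `D`. On `[0, W_{k-1}]` and `[W_{k-1}, D]`
the rate is piecewise constant and the allocation is exactly the left-hand side of (i). From
`W_{k-1}` on, the rate is one of `θ_k, …, θ_n, θH`, hence at least `θ^L` by (ii) and (iii), so
`[D, t]` contributes at least `θ^L (t - D)`.
-/

open MeasureTheory Set

section ConstantPiece

variable {f : ℝ → ℝ} {a b c : ℝ}

lemma intervalIntegrable_of_eqOn_Ioo (hab : a ≤ b) (h : EqOn f (fun _ => c) (Ioo a b)) :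
    IntervalIntegrable f volume a b :=
  intervalIntegrable_const.congr_uIoo (uIoo_of_le hab ▸ h.symm)

lemma integral_of_eqOn_Ioo (hab : a ≤ b) (h : EqOn f (fun _ => c) (Ioo a b)) :
    ∫ s in a..b, f s = c * (b - a) := by
  rw [intervalIntegral.integral_congr_Ioo_of_le hab h, intervalIntegral.integral_const,
    smul_eq_mul, mul_comm]

end ConstantPiece

section RateFunction

variable {n : ℕ} {w : ℕ → ℝ} (θ : ℕ → ℝ) (θH : ℝ)

lemma Wsum_zero (w : ℕ → ℝ) : Wsum w 0 = 0 := by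
  simp [Wsum]

lemma Wsum_succ (w : ℕ → ℝ) (p : ℕ) : Wsum w (p + 1) = Wsum w p + w (p + 1) :=
  Finset.sum_Icc_succ_top (by omega) w

lemma Wsum_mono (hw : ∀ j, 1 ≤ j → j ≤ n → 0 ≤ w j) {p q : ℕ} (hpq : p ≤ q) (hq : q ≤ n) :
    Wsum w p ≤ Wsum w q :=
  Finset.sum_le_sum_of_subset_of_nonneg (Finset.Icc_subset_Icc_right hpq) fun j hj _ =>
    hw j (Finset.mem_Icc.mp hj).1 ((Finset.mem_Icc.mp hj).2.trans hq)

lemma rateFn_of_mem_window (hw : ∀ j, 1 ≤ j → j ≤ n → 0 ≤ w j) {j : ℕ} (hj : 1 ≤ j)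
    (hjn : j ≤ n) {s : ℝ} (hs : s ∈ Ico (Wsum w (j - 1)) (Wsum w j)) :
    rateFn n w θ θH s = θ j := by
  rw [rateFn, if_pos (hs.2.trans_le (Wsum_mono hw hjn le_rfl))]
  congr 1
  have hjS : j ∈ {i : ℕ | 1 ≤ i ∧ s < Wsum w i} := ⟨hj, hs.2⟩
  refine le_antisymm (Nat.sInf_le hjS) (not_lt.mp fun hlt => ?_)
  have hmem := Nat.sInf_mem ⟨j, hjS⟩
  have := Wsum_mono hw (Nat.le_sub_one_of_lt hlt) (by omega)
  linarith [hmem.2, hs.1]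

lemma rateFn_of_Wsum_le {s : ℝ} (hs : Wsum w n ≤ s) : rateFn n w θ θH s = θH := by
  rw [rateFn, if_neg (not_lt.mpr hs)]

lemma le_rateFn_of_Wsum_le (hw : ∀ j, 1 ≤ j → j ≤ n → 0 ≤ w j) {k : ℕ} (hk : k - 1 ≤ n)
    {r : ℝ} (hθ : ∀ j, k ≤ j → j ≤ n → r ≤ θ j) (hθH : r ≤ θH) {s : ℝ}
    (hs : Wsum w (k - 1) ≤ s) : r ≤ rateFn n w θ θH s := by
  rw [rateFn]
  split_ifs with hsn
  · have hnS : n ∈ {i : ℕ | 1 ≤ i ∧ s < Wsum w i} := by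
      refine ⟨Nat.one_le_iff_ne_zero.mpr fun hn => ?_, hsn⟩
      subst hn
      exact absurd hs (not_le.mpr (by simpa [Nat.le_zero.mp hk] using hsn))
    have hmem := Nat.sInf_mem ⟨n, hnS⟩
    refine hθ _ (not_lt.mp fun hlt => ?_) (Nat.sInf_le hnS)
    have := Wsum_mono hw (Nat.le_sub_one_of_lt hlt) hk
    linarith [hmem.2]
  · exact hθH

lemma integral_rateFn_zero_Wsum (hw : ∀ j, 1 ≤ j → j ≤ n → 0 ≤ w j) {p : ℕ} (hp : p ≤ n) :
    IntervalIntegrable (rateFn n w θ θH) volume 0 (Wsum w p) ∧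
      ∫ s in (0 : ℝ)..Wsum w p, rateFn n w θ θH s = ∑ j ∈ Finset.Icc 1 p, θ j * w j := by
  induction p with
  | zero => simp [Wsum_zero]
  | succ p ih =>
    obtain ⟨hint, hval⟩ := ih (by omega)
    have hle : Wsum w p ≤ Wsum w (p + 1) := Wsum_mono hw p.le_succ hp
    have hconst :
        EqOn (rateFn n w θ θH) (fun _ => θ (p + 1)) (Ioo (Wsum w p) (Wsum w (p + 1))) :=
      fun s hs => rateFn_of_mem_window θ θH hw (by omega) hp (Ioo_subset_Ico_self hs)
    have hpiece := intervalIntegrable_of_eqOn_Ioo hle hconst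
    refine ⟨hint.trans hpiece, ?_⟩
    rw [← intervalIntegral.integral_add_adjacent_intervals hint hpiece, hval,
      integral_of_eqOn_Ioo hle hconst, Finset.sum_Icc_succ_top (by omega), Wsum_succ]
    ring

lemma intervalIntegrable_rateFn (hw : ∀ j, 1 ≤ j → j ≤ n → 0 ≤ w j) {b : ℝ} (hb : 0 ≤ b) :
    IntervalIntegrable (rateFn n w θ θH) volume 0 b := by
  have hWn := (integral_rateFn_zero_Wsum θ θH hw le_rfl).1
  have htail : IntervalIntegrable (rateFn n w θ θH) volume (Wsum w n) (max b (Wsum w n)) :=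
    intervalIntegrable_of_eqOn_Ioo (le_max_right _ _) fun s hs =>
      rateFn_of_Wsum_le θ θH hs.1.le
  have hWn_nonneg : 0 ≤ Wsum w n := Wsum_zero w ▸ Wsum_mono hw (Nat.zero_le n) le_rfl
  refine (hWn.trans htail).mono_set ?_
  rw [uIcc_of_le hb, uIcc_of_le (hWn_nonneg.trans (le_max_right _ _))]
  exact Icc_subset_Icc_right (le_max_left _ _)

end RateFunction

theorem stmt2_general (n : ℕ) (w θ : ℕ → ℝ)
    (hw : ∀ j, 1 ≤ j → j ≤ n → 0 ≤ w j) (θH : ℝ)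
    (θL CL CH : ℝ)
    (D : ℝ) (hD : 0 < D)
    (k : ℕ) (hk : ECW n w D k)
    (R : ℝ) (hR : R = if k ≤ n then θ k else θH)
    (h8 : CH - CL ≤ ∑ j ∈ Finset.Icc 1 (k - 1), θ j * w j + R * (D - Wsum w (k - 1)))
    (h9 : ∀ j, k ≤ j → j ≤ n → θL ≤ θ j)
    (h10 : θL ≤ θH) :
    ∀ t, D ≤ t → (CH - CL) + θL * (t - D) ≤ ∫ s in (0:ℝ)..t, rateFn n w θ θH s := by
  intro t ht
  obtain ⟨hk1, hk2, hkD, hkW⟩ := hk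
  have hkn : k - 1 ≤ n := by omega
  obtain ⟨hint₁, hval₁⟩ := integral_rateFn_zero_Wsum θ θH hw hkn
  have hconst : EqOn (rateFn n w θ θH) (fun _ => R) (Ioo (Wsum w (k - 1)) D) := by
    intro s hs
    rw [hR]
    split_ifs with hkn'
    · exact rateFn_of_mem_window θ θH hw hk1 hkn' ⟨hs.1.le, hs.2.trans_le (hkW hkn')⟩
    · exact rateFn_of_Wsum_le θ θH ((show k - 1 = n by omega) ▸ hs.1.le)
  have hint₂ := intervalIntegrable_of_eqOn_Ioo hkD.le hconst
  have hint₃ : IntervalIntegrable (rateFn n w θ θH) volume D t :=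
    (intervalIntegrable_rateFn θ θH hw hD.le).symm.trans
      (intervalIntegrable_rateFn θ θH hw (hD.le.trans ht))
  have htail : θL * (t - D) ≤ ∫ s in D..t, rateFn n w θ θH s := by
    have := intervalIntegral.integral_mono_on ht intervalIntegrable_const hint₃ fun s hs =>
      le_rateFn_of_Wsum_le θ θH hw hkn h9 h10 (hkD.le.trans hs.1)
    rwa [intervalIntegral.integral_const, smul_eq_mul, mul_comm] at this
  rw [← intervalIntegral.integral_add_adjacent_intervals (hint₁.trans hint₂) hint₃,
    ← intervalIntegral.integral_add_adjacent_intervals hint₁ hint₂, hval₁,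
    integral_of_eqOn_Ioo hkD.le hconst]
  linarith

/-- "If" direction of Theorem 1: under conditions (8)–(10), a carry-over job with
deadline `t ≥ D` after the mode switch receives at least `(C^H − C^L) + θ^L·(t − D)`
units of allocation by its deadline. -/
theorem stmt2 (n : ℕ) (hn : 1 ≤ n) (w θ : ℕ → ℝ)
    (hw : ∀ j, 1 ≤ j → j ≤ n → 0 ≤ w j) (θH : ℝ)
    (T θL CL CH : ℝ) (hT : 0 < T) (hθL : 0 < θL) (hCL : 0 < CL) (hCLH : CL ≤ CH)
    (D : ℝ) (hDdef : D = T - CL / θL) (hD : 0 < D)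
    (k : ℕ) (hk : ECW n w D k)
    (R : ℝ) (hR : R = if k ≤ n then θ k else θH)
    (h8 : CH - CL ≤ ∑ j ∈ Finset.Icc 1 (k - 1), θ j * w j + R * (D - Wsum w (k - 1)))
    (h9 : ∀ j, k ≤ j → j ≤ n → θL ≤ θ j)
    (h10 : θL ≤ θH) :
    ∀ t, D ≤ t → (CH - CL) + θL * (t - D) ≤ ∫ s in (0:ℝ)..t, rateFn n w θ θH s :=
  stmt2_general n w θ hw θH θL CL CH D hD k hk R hR h8 h9 h10
end

section
/- Let τ be a finite index set of tasks and τ_H ⊆ τ the subset of HI-tasks, with n_H = |τ_H| ≥ 1. For each i ∈ τ let T_i > 0 and 0 < C_i^L ≤ C_i^H be reals, and set u_i^L = C_i^L/T_i and u_i^H = C_i^H/T_i. Let m be a positive real. Suppose there exist rates (θ_i^L)_{i∈τ} and (θ_i^H)_{i∈τ_H} with 0 < θ_i^L ≤ 1 and 0 < θ_i^H ≤ 1 satisfying the dual-rate test: (1) θ_i^L ≥ u_i^L for all i ∈ τ; (2) u_i^L/θ_i^L + (u_i^H − u_i^L)/θ_i^H ≤ 1 for all i ∈ τ_H; (3) θ_i^L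 ≤ θ_i^H for all i ∈ τ_H; (4) Σ_{i∈τ} θ_i^L ≤ m; and (5) Σ_{i∈τ_H} θ_i^H ≤ m. Then the multi-rate assignment with the same LO-mode rates θ_i^L, transition rates θ_{i,j}^H := θ_i^H for all 1 ≤ j ≤ n_H, stable rates θ_i^H, window durations w_j := 0 for all j, and k_i := n_H + 1 for each i ∈ τ_H satisfies all multi-rate schedulability conditions: θ_i^L ≥ u_i^L for all i ∈ τ; Σ_{i∈τ} θ_i^L ≤ m; Σ_{i∈τ_H} θ_{i,j}^H ≤ m for each window j and Σ_{i∈τ_H} θ_i^H ≤ m; and for each i ∈ τ_H, with D_i = T_i − C_i^L/θ_i^L: θ_i^H·D_i ≥ C_i^H − C_i^L, θ_i^L ≤ θ_i^H, and θ_i^H ≥ u_i^H. -/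
/-!
Every multi-rate condition is either one of the dual-rate conditions (1), (3)–(5) or a
per-task consequence of (2): clearing denominators in (2) gives the carry-over inequality, and
since `θ_i^L ≤ θ_i^H`, (2) also bounds `u_i^H / θ_i^H` by `1`.
-/

theorem le_of_div_add_sub_div_le_one {uL uH θL θH : ℝ} (huL : 0 ≤ uL) (hθL : 0 < θL)
    (hθLH : θL ≤ θH) (h : uL / θL + (uH - uL) / θH ≤ 1) : uH ≤ θH := by
  have hθH : 0 < θH := hθL.trans_le hθLH
  have hdiv : uL / θH ≤ uL / θL := div_le_div_of_nonneg_left huL hθL hθLH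
  have : uH / θH ≤ 1 := by
    calc uH / θH = uL / θH + (uH - uL) / θH := by rw [← add_div, add_sub_cancel]
      _ ≤ 1 := by linarith
  rwa [div_le_one hθH] at this

theorem sub_le_mul_sub_div_of_div_add_sub_div_le_one {T CL CH θL θH : ℝ} (hT : 0 < T)
    (hθL : 0 < θL) (hθH : 0 < θH) (h : CL / T / θL + (CH / T - CL / T) / θH ≤ 1) :
    CH - CL ≤ θH * (T - CL / θL) := by
  field_simp at h ⊢
  linarith

theorem stmt10_general {ι : Type*} (τ τH : Finset ι) (hsub : τH ⊆ τ)
    (nH : ℕ)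
    (T CL CH : ι → ℝ)
    (hT : ∀ i ∈ τ, 0 < T i) (hCL : ∀ i ∈ τ, 0 < CL i)
    (uL uH : ι → ℝ)
    (huL : ∀ i ∈ τ, uL i = CL i / T i) (huH : ∀ i ∈ τ, uH i = CH i / T i)
    (m : ℝ)
    (θL θHI : ι → ℝ)
    (hθL : ∀ i ∈ τ, 0 < θL i ∧ θL i ≤ 1)
    (hθHI : ∀ i ∈ τH, 0 < θHI i ∧ θHI i ≤ 1)
    (c1 : ∀ i ∈ τ, uL i ≤ θL i)
    (c2 : ∀ i ∈ τH, uL i / θL i + (uH i - uL i) / θHI i ≤ 1)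
    (c3 : ∀ i ∈ τH, θL i ≤ θHI i)
    (c4 : ∑ i ∈ τ, θL i ≤ m)
    (c5 : ∑ i ∈ τH, θHI i ≤ m)
    -- the multi-rate assignment: transition rates `θt i j = θHI i`, windows `wz j = 0`
    (θt : ι → ℕ → ℝ) (hθt : ∀ i ∈ τH, ∀ j, 1 ≤ j → j ≤ nH → θt i j = θHI i)
    (D : ι → ℝ) (hD : ∀ i ∈ τH, D i = T i - CL i / θL i) :
    (∀ i ∈ τ, uL i ≤ θL i) ∧
    (∑ i ∈ τ, θL i ≤ m) ∧
    (∀ j, 1 ≤ j → j ≤ nH → ∑ i ∈ τH, θt i j ≤ m) ∧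
    (∑ i ∈ τH, θHI i ≤ m) ∧
    (∀ i ∈ τH,
      CH i - CL i ≤ θHI i * D i ∧ θL i ≤ θHI i ∧ uH i ≤ θHI i) := by
  refine ⟨c1, c4, fun j h1 h2 => ?_, c5, fun i hi => ⟨?_, c3 i hi, ?_⟩⟩
  · rw [Finset.sum_congr rfl fun i hi => hθt i hi j h1 h2]
    exact c5
  · have hiτ := hsub hi
    have hc2 := c2 i hi
    rw [huL i hiτ, huH i hiτ] at hc2
    rw [hD i hi]
    exact sub_le_mul_sub_div_of_div_add_sub_div_le_one (hT i hiτ) (hθL i hiτ).1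
      (hθHI i hi).1 hc2
  · have hiτ := hsub hi
    have huL_nonneg : 0 ≤ uL i := by
      rw [huL i hiτ]
      exact div_nonneg (hCL i hiτ).le (hT i hiτ).le
    exact le_of_div_add_sub_div_le_one huL_nonneg (hθL i hiτ).1 (c3 i hi) (c2 i hi)

/-- Core of **Lemma 3** (dominance of the multi-rate model over the dual-rate model):
any feasible dual-rate assignment `(θ_i^L, θ_i^H)` satisfying the dual-rate test
(1)–(5) yields a feasible multi-rate assignment with transition rates
`θ_{i,j}^H := θ_i^H`, window durations `w_j := 0` and `k_i := n_H + 1`, i.e. all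
multi-rate schedulability conditions hold (Equation (8) with all windows of zero
duration reduces to `θ_i^H·D_i ≥ C_i^H − C_i^L` where `D_i = T_i − C_i^L/θ_i^L`). -/
theorem stmt10 {ι : Type*} (τ τH : Finset ι) (hsub : τH ⊆ τ)
    (nH : ℕ) (hnH : nH = τH.card) (hnH1 : 1 ≤ nH)
    (T CL CH : ι → ℝ)
    (hT : ∀ i ∈ τ, 0 < T i) (hCL : ∀ i ∈ τ, 0 < CL i) (hCLH : ∀ i ∈ τ, CL i ≤ CH i)
    (uL uH : ι → ℝ)
    (huL : ∀ i ∈ τ, uL i = CL i / T i) (huH : ∀ i ∈ τ, uH i = CH i / T i)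
    (m : ℝ) (hm : 0 < m)
    (θL θHI : ι → ℝ)
    (hθL : ∀ i ∈ τ, 0 < θL i ∧ θL i ≤ 1)
    (hθHI : ∀ i ∈ τH, 0 < θHI i ∧ θHI i ≤ 1)
    (c1 : ∀ i ∈ τ, uL i ≤ θL i)
    (c2 : ∀ i ∈ τH, uL i / θL i + (uH i - uL i) / θHI i ≤ 1)
    (c3 : ∀ i ∈ τH, θL i ≤ θHI i)
    (c4 : ∑ i ∈ τ, θL i ≤ m)
    (c5 : ∑ i ∈ τH, θHI i ≤ m)
    -- the multi-rate assignment: transition rates `θt i j = θHI i`, windows `wz j = 0`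
    (θt : ι → ℕ → ℝ) (hθt : ∀ i ∈ τH, ∀ j, 1 ≤ j → j ≤ nH → θt i j = θHI i)
    (wz : ℕ → ℝ) (hwz : ∀ j, 1 ≤ j → j ≤ nH → wz j = 0)
    (ki : ι → ℕ) (hki : ∀ i ∈ τH, ki i = nH + 1)
    (D : ι → ℝ) (hD : ∀ i ∈ τH, D i = T i - CL i / θL i) :
    (∀ i ∈ τ, uL i ≤ θL i) ∧
    (∑ i ∈ τ, θL i ≤ m) ∧
    (∀ j, 1 ≤ j → j ≤ nH → ∑ i ∈ τH, θt i j ≤ m) ∧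
    (∑ i ∈ τH, θHI i ≤ m) ∧
    (∀ i ∈ τH,
      CH i - CL i ≤ θHI i * D i ∧ θL i ≤ θHI i ∧ uH i ≤ θHI i) :=
  stmt10_general τ τH hsub nH T CL CH hT hCL uL uH huL huH m θL θHI hθL hθHI c1 c2 c3 c4 c5 θt hθt D
    hD
end
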